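/- arXiv:2402.12523 — 3 statements merged into one kernel-verified Lean document; each statement's English description precedes it below -/
import Mathlib

section
/- Let p ≥ 1 and α > -1. Then ‖δ_s‖_{(A^p_{α,∞})^*} = O(2^{-Re s}) as Re s → +∞; that is, there exist C > 0 and σ₀ > 1/2 such that ‖δ_s‖_{(A^p_{α,∞})^*} ≤ C · 2^{-Re s} for every s ∈ ℂ with Re s ≥ σ₀. -/
/-!
Orthogonality of the Bohr monomials on `T^∞` gives `|a_n| ≤ ‖P‖_{H^1} ≤ ‖P‖_{H^p}` for every
coefficient, and `n^{-σ} ≥ 1/n` for `σ ≤ 1`; integrating `‖P_σ‖_{H^p}^p` against `h_α`, which is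
bounded below on `[1/2, 1]`, therefore gives `|a_n| ≤ K n` whenever `‖P‖_{A^p_α} ≤ 1`. With zero
constant term and `Re s ≥ 3` this yields
`|P(s)| ≤ K ∑_{n ≥ 2} n^{1 - Re s} ≤ 8 K 2^{-Re s} ∑_{n ≥ 2} n^{-2} ≤ 8 K 2^{-Re s}`.
-/

open MeasureTheory Complex Set

noncomputable section

/-- The infinite polytorus `T^∞`, realized as a countable product of (additive) circles. -/
abbrev PolyTorus : Type := ℕ → UnitAddCircle

/-- The normalized Haar probability measure `m_∞` on the infinite polytorus. -/
noncomputable def haarPolyTorus : Measure PolyTorus := Measure.addHaarMeasure ⊤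

/-- The Bohr lift of the Dirichlet monomial `n^{-s}`: the function
`z ↦ ∏_j z_j^{ν_j(n)}` where `ν_j(n)` is the exponent of the `j`-th prime in `n`. -/
noncomputable def bohrMonomial (z : PolyTorus) (n : ℕ) : ℂ :=
  n.factorization.prod fun q k => (((z (Nat.count Nat.Prime q)).toCircle : ℂ)) ^ k

/-- The `H^p`-norm of the Dirichlet polynomial `s ↦ ∑_{n=1}^N a n · n^{-s}`. -/
noncomputable def HpNorm (p : ℝ) (N : ℕ) (a : ℕ → ℂ) : ℝ :=
  (∫ z : PolyTorus, ‖∑ n ∈ Finset.Icc 1 N, a n * bohrMonomial z n‖ ^ p ∂haarPolyTorus) ^ (1 / p)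

/-- The coefficients of the translated Dirichlet polynomial `P_σ(s) = P(σ + s)`. -/
noncomputable def transl (σ : ℝ) (a : ℕ → ℂ) : ℕ → ℂ :=
  fun n => a n * (((n : ℝ) ^ (-σ) : ℝ) : ℂ)

/-- The density `h_α(σ) = (2^{α+1}/Γ(α+1)) σ^α e^{-2σ}`. -/
noncomputable def hWeight (α : ℝ) (σ : ℝ) : ℝ :=
  (2 ^ (α + 1) / Real.Gamma (α + 1)) * σ ^ α * Real.exp (-2 * σ)

/-- The `A^p_α`-norm of the Dirichlet polynomial with coefficients `a` (up to degree `N`). -/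
noncomputable def ApNorm (p α : ℝ) (N : ℕ) (a : ℕ → ℂ) : ℝ :=
  (∫ σ in Set.Ioi (0 : ℝ), HpNorm p N (transl σ a) ^ p * hWeight α σ) ^ (1 / p)

/-- Evaluation of the Dirichlet polynomial `∑_{n=1}^N a n · n^{-s}` at `s`. -/
noncomputable def dirEval (N : ℕ) (a : ℕ → ℂ) (s : ℂ) : ℂ :=
  ∑ n ∈ Finset.Icc 1 N, a n * (n : ℂ) ^ (-s)

/-- The norm of the evaluation functional `δ_s` on `A^p_α`. -/
noncomputable def deltaNorm (p α : ℝ) (s : ℂ) : ℝ :=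
  sSup {x : ℝ | ∃ (N : ℕ) (a : ℕ → ℂ), ApNorm p α N a ≤ 1 ∧ x = ‖dirEval N a s‖}

/-- The norm of the evaluation functional `δ_s` on `A^p_{α,∞}` (zero constant term). -/
noncomputable def deltaNormZero (p α : ℝ) (s : ℂ) : ℝ :=
  sSup {x : ℝ | ∃ (N : ℕ) (a : ℕ → ℂ), a 1 = 0 ∧ ApNorm p α N a ≤ 1 ∧ x = ‖dirEval N a s‖}

/-- Coefficients of `I_t P`: `a n (log n)^{-t}`. -/
noncomputable def Icoef (t : ℝ) (a : ℕ → ℂ) : ℕ → ℂ :=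
  fun n => a n * ((Real.log n ^ (-t) : ℝ) : ℂ)

open ComplexConjugate

lemma norm_bohrMonomial (z : PolyTorus) (n : ℕ) : ‖bohrMonomial z n‖ = 1 := by
  simp [bohrMonomial, Finsupp.prod, Circle.norm_coe]

lemma continuous_bohrMonomial (n : ℕ) : Continuous fun z : PolyTorus => bohrMonomial z n := by
  unfold bohrMonomial Finsupp.prod
  have := @AddCircle.continuous_toCircle 1
  fun_prop

lemma bohrMonomial_add (w z : PolyTorus) (n : ℕ) :
    bohrMonomial (w + z) n = bohrMonomial w n * bohrMonomial z n := by
  simp only [bohrMonomial, Finsupp.prod, Pi.add_apply, AddCircle.toCircle_add, Circle.coe_mul,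
    mul_pow, Finset.prod_mul_distrib]

lemma bohrMonomial_single {q : ℕ} (hq : q.Prime) (t : UnitAddCircle) (n : ℕ) :
    bohrMonomial (Pi.single (Nat.count Nat.Prime q) t) n =
      (t.toCircle : ℂ) ^ n.factorization q := by
  rw [bohrMonomial, Finsupp.prod_eq_single q]
  · rw [Pi.single_eq_same]
  · intro q' hq' hne
    have hq'p : q'.Prime := by
      by_contra h
      exact hq' (Nat.factorization_eq_zero_of_not_prime _ h)
    rw [Pi.single_eq_of_ne (fun h => hne (Nat.count_injective hq'p hq h)),
      AddCircle.toCircle_zero, Circle.coe_one, one_pow]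
  · simp

instance : IsProbabilityMeasure haarPolyTorus :=
  ⟨by simpa [haarPolyTorus] using Measure.addHaarMeasure_self (G := PolyTorus) (K₀ := ⊤)⟩

instance : haarPolyTorus.IsAddHaarMeasure := by
  unfold haarPolyTorus; infer_instance

lemma integrable_of_continuous_polyTorus {E : Type*} [NormedAddCommGroup E] {f : PolyTorus → E}
    (hf : Continuous f) : Integrable f haarPolyTorus :=
  hf.integrable_of_hasCompactSupport (.of_compactSpace f)

/-- Translating the `j`-th coordinate by `1 / (2(a - b))`, where `a ≠ b` are the exponents of the
`j`-th prime in `m` and `n`, multiplies the integrand by `-1`. -/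
lemma integral_bohrMonomial_mul_conj_of_ne {m n : ℕ} (hm : m ≠ 0) (hn : n ≠ 0) (hmn : m ≠ n) :
    ∫ z, bohrMonomial z m * conj (bohrMonomial z n) ∂haarPolyTorus = 0 := by
  obtain ⟨q, hq⟩ : ∃ q, m.factorization q ≠ n.factorization q := by
    by_contra! h
    exact hmn (Nat.factorization_inj hm hn (Finsupp.ext h))
  have hqp : q.Prime := by
    by_contra hq'
    simp [Nat.factorization_eq_zero_of_not_prime _ hq'] at hq
  set d : ℝ := m.factorization q - n.factorization q
  have hd : d ≠ 0 := sub_ne_zero.mpr (by exact_mod_cast hq)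
  set t : ℝ := 1 / (2 * d)
  set c : PolyTorus := Pi.single (Nat.count Nat.Prime q) (t : UnitAddCircle)
  have hc : bohrMonomial c m * conj (bohrMonomial c n) = -1 := by
    have hdt : m.factorization q • (t : UnitAddCircle) + -(n.factorization q • (t : UnitAddCircle))
        = ((1 / 2 : ℝ) : UnitAddCircle) := by
      rw [← AddCircle.coe_nsmul, ← AddCircle.coe_nsmul, ← AddCircle.coe_neg, ← AddCircle.coe_add]
      congr 1
      simp only [nsmul_eq_mul, t, d] at hd ⊢
      field_simp
      ring
    rw [bohrMonomial_single hqp, bohrMonomial_single hqp, ← Circle.coe_pow,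
      ← Circle.coe_pow, ← Circle.coe_inv_eq_conj, ← Circle.coe_mul, ← AddCircle.toCircle_nsmul,
      ← AddCircle.toCircle_nsmul, ← AddCircle.toCircle_neg, ← AddCircle.toCircle_add, hdt,
      AddCircle.toCircle_apply_mk, Circle.coe_exp]
    convert Complex.exp_pi_mul_I using 2
    push_cast
    ring
  refine integral_eq_zero_of_add_left_eq_neg (g := c) fun z => ?_
  rw [bohrMonomial_add, bohrMonomial_add, map_mul, mul_mul_mul_comm, hc, neg_one_mul]

lemma integral_bohrMonomial_mul_conj {m n : ℕ} (hm : m ≠ 0) (hn : n ≠ 0) :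
    ∫ z, bohrMonomial z m * conj (bohrMonomial z n) ∂haarPolyTorus = if m = n then 1 else 0 := by
  split_ifs with hmn
  · subst hmn
    simp [Complex.mul_conj, Complex.normSq_eq_norm_sq, norm_bohrMonomial]
  · exact integral_bohrMonomial_mul_conj_of_ne hm hn hmn

def bohrLift (N : ℕ) (c : ℕ → ℂ) (z : PolyTorus) : ℂ :=
  ∑ m ∈ Finset.Icc 1 N, c m * bohrMonomial z m

lemma continuous_bohrLift (N : ℕ) (c : ℕ → ℂ) : Continuous (bohrLift N c) :=
  continuous_finsetSum _ fun m _ => continuous_const.mul (continuous_bohrMonomial m)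

lemma integral_bohrLift_mul_conj {N n : ℕ} (c : ℕ → ℂ) (hn : n ∈ Finset.Icc 1 N) :
    ∫ z, bohrLift N c z * conj (bohrMonomial z n) ∂haarPolyTorus = c n := by
  have hn0 : n ≠ 0 := by grind
  simp_rw [bohrLift, Finset.sum_mul, mul_assoc]
  rw [integral_finsetSum _ fun m _ => integrable_of_continuous_polyTorus (by
    have := continuous_bohrMonomial m; have := continuous_bohrMonomial n; fun_prop)]
  simp_rw [integral_const_mul]
  rw [Finset.sum_congr rfl fun m hm => by
    rw [integral_bohrMonomial_mul_conj (by grind) hn0]]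
  simp [hn]

lemma norm_le_integral_norm_bohrLift {N n : ℕ} (c : ℕ → ℂ) (hn : n ∈ Finset.Icc 1 N) :
    ‖c n‖ ≤ ∫ z, ‖bohrLift N c z‖ ∂haarPolyTorus := by
  calc ‖c n‖ = ‖∫ z, bohrLift N c z * conj (bohrMonomial z n) ∂haarPolyTorus‖ := by
        rw [integral_bohrLift_mul_conj c hn]
    _ ≤ ∫ z, ‖bohrLift N c z * conj (bohrMonomial z n)‖ ∂haarPolyTorus :=
        norm_integral_le_integral_norm _
    _ = ∫ z, ‖bohrLift N c z‖ ∂haarPolyTorus := by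
        simp [norm_bohrMonomial]

lemma integral_norm_le_integral_norm_rpow {p : ℝ} (hp : 1 ≤ p) {f : PolyTorus → ℂ}
    (hf : Continuous f) :
    ∫ z, ‖f z‖ ∂haarPolyTorus ≤ (∫ z, ‖f z‖ ^ p ∂haarPolyTorus) ^ (1 / p) := by
  have hp0 : 0 < p := zero_lt_one.trans_le hp
  have hjensen : (∫ z, ‖f z‖ ∂haarPolyTorus) ^ p ≤ ∫ z, ‖f z‖ ^ p ∂haarPolyTorus :=
    (convexOn_rpow hp).map_integral_le (Real.continuous_rpow_const hp0.le).continuousOn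
      isClosed_Ici (.of_forall fun z => norm_nonneg _) (integrable_of_continuous_polyTorus hf.norm)
      (integrable_of_continuous_polyTorus (hf.norm.rpow_const fun _ => .inr hp0.le))
  rw [one_div, Real.le_rpow_inv_iff_of_pos (integral_nonneg fun _ => norm_nonneg _)
    (integral_nonneg fun _ => by positivity) hp0]
  exact hjensen

lemma norm_le_HpNorm {p : ℝ} (hp : 1 ≤ p) {N n : ℕ} (c : ℕ → ℂ) (hn : n ∈ Finset.Icc 1 N) :
    ‖c n‖ ≤ HpNorm p N c :=
  (norm_le_integral_norm_bohrLift c hn).trans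
    (integral_norm_le_integral_norm_rpow hp (continuous_bohrLift N c))

lemma hWeight_pos {α σ : ℝ} (hα : -1 < α) (hσ : 0 < σ) : 0 < hWeight α σ := by
  have := Real.Gamma_pos_of_pos (show 0 < α + 1 by linarith)
  unfold hWeight
  positivity

lemma continuousOn_hWeight (α : ℝ) : ContinuousOn (hWeight α) (Ioi 0) := by
  unfold hWeight
  exact (continuousOn_const.mul (continuousOn_id.rpow_const fun σ hσ => .inl (ne_of_gt hσ))).mul
    (by fun_prop)

lemma integrableOn_hWeight {α : ℝ} (hα : -1 < α) : IntegrableOn (hWeight α) (Ioi 0) := by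
  refine ((Real.GammaIntegral_convergent (show 0 < α + 1 by linarith)).const_mul
    (2 ^ (α + 1) / Real.Gamma (α + 1))).mono'
    ((continuousOn_hWeight α).aestronglyMeasurable measurableSet_Ioi) ?_
  filter_upwards [self_mem_ae_restrict measurableSet_Ioi] with σ (hσ : 0 < σ)
  rw [Real.norm_of_nonneg (hWeight_pos hα hσ).le, hWeight, add_sub_cancel_right, mul_assoc,
    mul_comm (Real.exp _)]
  have := Real.Gamma_pos_of_pos (show 0 < α + 1 by linarith)
  gcongr
  linarith

lemma exists_pos_le_hWeight {α : ℝ} (hα : -1 < α) :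
    ∃ c > 0, ∀ σ ∈ Icc (1 / 2 : ℝ) 1, c ≤ hWeight α σ := by
  obtain ⟨σ₁, hσ₁, hmin⟩ :=
    isCompact_Icc.exists_isMinOn (nonempty_Icc.mpr (by norm_num : (1 / 2 : ℝ) ≤ 1))
    ((continuousOn_hWeight α).mono fun σ hσ => (by norm_num : (0 : ℝ) < 1 / 2).trans_le hσ.1)
  exact ⟨_, hWeight_pos hα ((by norm_num : (0 : ℝ) < 1 / 2).trans_le hσ₁.1), hmin⟩

lemma norm_transl_le {σ : ℝ} (hσ : 0 ≤ σ) (a : ℕ → ℂ) {n : ℕ} (hn : 1 ≤ n) :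
    ‖transl σ a n‖ ≤ ‖a n‖ := by
  have hn' : (1 : ℝ) ≤ n := by exact_mod_cast hn
  rw [transl, norm_mul, Complex.norm_real, Real.norm_of_nonneg (by positivity)]
  exact mul_le_of_le_one_right (norm_nonneg _)
    (Real.rpow_le_one_of_one_le_of_nonpos hn' (by linarith))

lemma norm_div_le_norm_transl {σ : ℝ} (hσ : σ ≤ 1) (a : ℕ → ℂ) {n : ℕ} (hn : 1 ≤ n) :
    ‖a n‖ / n ≤ ‖transl σ a n‖ := by
  have hn' : (1 : ℝ) ≤ n := by exact_mod_cast hn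
  rw [transl, norm_mul, Complex.norm_real, Real.norm_of_nonneg (by positivity), div_eq_mul_inv,
    ← Real.rpow_neg_one]
  gcongr

lemma HpNorm_nonneg (p : ℝ) (N : ℕ) (c : ℕ → ℂ) : 0 ≤ HpNorm p N c :=
  Real.rpow_nonneg (integral_nonneg fun _ => by positivity) _

lemma HpNorm_rpow {p : ℝ} (hp : 0 < p) (N : ℕ) (c : ℕ → ℂ) :
    HpNorm p N c ^ p = ∫ z, ‖bohrLift N c z‖ ^ p ∂haarPolyTorus := by
  rw [HpNorm, ← Real.rpow_mul (integral_nonneg fun _ => by positivity), one_div,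
    inv_mul_cancel₀ hp.ne', Real.rpow_one]
  rfl

lemma HpNorm_le_sum_norm {p : ℝ} (hp : 0 < p) (N : ℕ) (c : ℕ → ℂ) :
    HpNorm p N c ≤ ∑ m ∈ Finset.Icc 1 N, ‖c m‖ := by
  have hpt : ∀ z, ‖bohrLift N c z‖ ^ p ≤ (∑ m ∈ Finset.Icc 1 N, ‖c m‖) ^ p := fun z => by
    gcongr
    exact (norm_sum_le _ _).trans_eq (by simp [norm_bohrMonomial])
  rw [HpNorm, one_div, Real.rpow_inv_le_iff_of_pos (integral_nonneg fun _ => by positivity)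
    (by positivity) hp]
  exact (integral_mono_of_nonneg (.of_forall fun _ => by positivity) (integrable_const _)
    (.of_forall hpt)).trans_eq (by simp)

lemma stronglyMeasurable_HpNorm_transl_rpow {p : ℝ} (hp : 0 < p) (N : ℕ) (a : ℕ → ℂ) :
    StronglyMeasurable fun σ => HpNorm p N (transl σ a) ^ p := by
  simp_rw [HpNorm_rpow hp]
  refine StronglyMeasurable.integral_prod_right' (f := fun x : ℝ × PolyTorus =>
    ‖bohrLift N (transl x.1 a) x.2‖ ^ p) (Continuous.stronglyMeasurable ?_)
  refine (Continuous.norm ?_).rpow_const fun _ => .inr hp.le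
  refine continuous_finsetSum _ fun m hm =>
    Continuous.mul ?_ ((continuous_bohrMonomial m).comp continuous_snd)
  have hm : (m : ℝ) ≠ 0 := by have := (Finset.mem_Icc.mp hm).1; positivity
  exact continuous_const.mul (Complex.continuous_ofReal.comp
    ((Real.continuous_const_rpow hm).comp continuous_fst.neg))

lemma integrableOn_HpNorm_transl_rpow_mul_hWeight {p α : ℝ} (hp : 0 < p) (hα : -1 < α) (N : ℕ)
    (a : ℕ → ℂ) :
    IntegrableOn (fun σ => HpNorm p N (transl σ a) ^ p * hWeight α σ) (Ioi 0) := by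
  refine ((integrableOn_hWeight hα).const_mul ((∑ m ∈ Finset.Icc 1 N, ‖a m‖) ^ p)).mono'
    ((stronglyMeasurable_HpNorm_transl_rpow hp N a).aestronglyMeasurable.mul
      ((continuousOn_hWeight α).aestronglyMeasurable measurableSet_Ioi)) ?_
  filter_upwards [self_mem_ae_restrict measurableSet_Ioi] with σ (hσ : 0 < σ)
  have hw := (hWeight_pos hα hσ).le
  have := HpNorm_nonneg p N (transl σ a)
  rw [norm_mul, Real.norm_of_nonneg hw, Real.norm_of_nonneg (by positivity)]
  gcongr
  refine (HpNorm_le_sum_norm hp N _).trans ?_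
  gcongr with m hm
  exact norm_transl_le hσ.le a (Finset.mem_Icc.mp hm).1

lemma exists_norm_le_mul_of_ApNorm_le_one {p α : ℝ} (hp : 1 ≤ p) (hα : -1 < α) :
    ∃ K > 0, ∀ (N : ℕ) (a : ℕ → ℂ), ApNorm p α N a ≤ 1 →
      ∀ n ∈ Finset.Icc 1 N, ‖a n‖ ≤ K * n := by
  have hp0 : 0 < p := zero_lt_one.trans_le hp
  obtain ⟨c, hc, hcw⟩ := exists_pos_le_hWeight hα
  refine ⟨(2 / c) ^ (1 / p), by positivity, fun N a hA n hn => ?_⟩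
  have hn0 : (0 : ℝ) < n := Nat.cast_pos.mpr (Finset.mem_Icc.mp hn).1
  set F := fun σ => HpNorm p N (transl σ a) ^ p * hWeight α σ
  have hFint := integrableOn_HpNorm_transl_rpow_mul_hWeight hp0 hα N a
  have hF_nonneg : ∀ σ ∈ Ioi (0 : ℝ), 0 ≤ F σ := fun σ hσ =>
    mul_nonneg (Real.rpow_nonneg (HpNorm_nonneg p N _) _) (hWeight_pos hα hσ).le
  have hsub : Icc (1 / 2 : ℝ) 1 ⊆ Ioi 0 := fun σ hσ => (by norm_num : (0 : ℝ) < 1 / 2).trans_le hσ.1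
  have hF_le_one : ∫ σ in Ioi 0, F σ ≤ 1 := by
    rwa [ApNorm, one_div, Real.rpow_inv_le_iff_of_pos
      (setIntegral_nonneg measurableSet_Ioi hF_nonneg) zero_le_one hp0, Real.one_rpow] at hA
  have hF_ge : ∀ σ ∈ Icc (1 / 2 : ℝ) 1, (‖a n‖ / n) ^ p * c ≤ F σ := fun σ hσ => by
    have := (norm_div_le_norm_transl hσ.2 a (Finset.mem_Icc.mp hn).1).trans (norm_le_HpNorm hp _ hn)
    exact mul_le_mul (by gcongr) (hcw σ hσ) hc.le (Real.rpow_nonneg (HpNorm_nonneg p N _) _)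
  have hmass : (‖a n‖ / n) ^ p * c * (1 / 2) ≤ 1 := by
    calc (‖a n‖ / n) ^ p * c * (1 / 2)
        = (‖a n‖ / n) ^ p * c * volume.real (Icc (1 / 2 : ℝ) 1) := by norm_num
      _ ≤ ∫ σ in Icc (1 / 2 : ℝ) 1, F σ :=
        setIntegral_ge_of_const_le_real measurableSet_Icc (by simp) hF_ge (hFint.mono_set hsub)
      _ ≤ ∫ σ in Ioi 0, F σ :=
        setIntegral_mono_set hFint (ae_restrict_of_forall_mem measurableSet_Ioi hF_nonneg)
          hsub.eventuallyLE
      _ ≤ 1 := hF_le_one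
  have : ‖a n‖ / n ≤ (2 / c) ^ (1 / p) := by
    rw [one_div, Real.le_rpow_inv_iff_of_pos (by positivity) (by positivity) hp0, le_div_iff₀ hc]
    linarith
  rwa [div_le_iff₀ hn0] at this

lemma mul_rpow_neg_le {x σ : ℝ} (hx : 2 ≤ x) (hσ : 3 ≤ σ) :
    x * x ^ (-σ) ≤ 8 * 2 ^ (-σ) * (x ^ 2)⁻¹ := by
  have hx0 : 0 < x := by linarith
  have hpow : ∀ y : ℝ, 0 < y → y ^ (3 - σ) = y ^ 3 * y ^ (-σ) := fun y hy => by
    rw [sub_eq_add_neg, Real.rpow_add hy, Real.rpow_ofNat]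
  have hmono : x ^ (3 - σ) ≤ 2 ^ (3 - σ) :=
    Real.rpow_le_rpow_of_nonpos two_pos hx (by linarith)
  rw [hpow x hx0, hpow 2 two_pos] at hmono
  rw [le_mul_inv_iff₀ (by positivity)]
  norm_num at hmono
  linarith

lemma norm_dirEval_le {N : ℕ} {a : ℕ → ℂ} {K : ℝ} (ha₁ : a 1 = 0) (hK : 0 ≤ K)
    (ha : ∀ n ∈ Finset.Icc 1 N, ‖a n‖ ≤ K * n) {s : ℂ} (hs : 3 ≤ s.re) :
    ‖dirEval N a s‖ ≤ 8 * K * 2 ^ (-s.re) := by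
  have hsum : dirEval N a s = ∑ n ∈ Finset.Ioo 1 (N + 1), a n * (n : ℂ) ^ (-s) := by
    refine (Finset.sum_subset (fun n hn => by grind) fun n hn hn' => ?_).symm
    obtain rfl : n = 1 := by grind
    simp [ha₁]
  have hterm : ∀ n ∈ Finset.Ioo 1 (N + 1),
      ‖a n * (n : ℂ) ^ (-s)‖ ≤ 8 * K * 2 ^ (-s.re) * ((n : ℝ) ^ 2)⁻¹ := fun n hn => by
    have hn2 : (2 : ℝ) ≤ n := by exact_mod_cast (Finset.mem_Ioo.mp hn).1
    rw [norm_mul, Complex.norm_natCast_cpow_of_pos (by grind), Complex.neg_re]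
    calc ‖a n‖ * (n : ℝ) ^ (-s.re) ≤ K * n * (n : ℝ) ^ (-s.re) := by
          gcongr
          exact ha n (by grind)
      _ ≤ K * (8 * 2 ^ (-s.re) * ((n : ℝ) ^ 2)⁻¹) := by
          rw [mul_assoc]
          exact mul_le_mul_of_nonneg_left (mul_rpow_neg_le hn2 hs) hK
      _ = _ := by ring
  calc ‖dirEval N a s‖ ≤ ∑ n ∈ Finset.Ioo 1 (N + 1), 8 * K * 2 ^ (-s.re) * ((n : ℝ) ^ 2)⁻¹ := by
        rw [hsum]
        exact (norm_sum_le _ _).trans (Finset.sum_le_sum hterm)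
    _ = 8 * K * 2 ^ (-s.re) * ∑ n ∈ Finset.Ioo 1 (N + 1), ((n : ℝ) ^ 2)⁻¹ := by
        rw [Finset.mul_sum]
    _ ≤ 8 * K * 2 ^ (-s.re) * (2 / (1 + 1)) := by
        gcongr
        exact_mod_cast sum_Ioo_inv_sq_le (α := ℝ) 1 (N + 1)
    _ = 8 * K * 2 ^ (-s.re) := by norm_num

/-- `‖δ_s‖_{(A^p_{α,∞})^*} = O(2^{-Re s})` as `Re s → +∞`. -/
theorem stmt3 (p α : ℝ) (hp : 1 ≤ p) (hα : -1 < α) :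
    ∃ C > (0 : ℝ), ∃ σ₀ : ℝ, 1 / 2 < σ₀ ∧
      ∀ s : ℂ, σ₀ ≤ s.re → deltaNormZero p α s ≤ C * (2 : ℝ) ^ (-s.re) := by
  obtain ⟨K, hK, hcoeff⟩ := exists_norm_le_mul_of_ApNorm_le_one hp hα
  refine ⟨8 * K, by positivity, 3, by norm_num, fun s hs => Real.sSup_le ?_ (by positivity)⟩
  rintro _ ⟨N, a, ha₁, hA, rfl⟩
  exact norm_dirEval_le ha₁ hK.le (hcoeff N a hA) hs
end
end

section
/- Let f(s) = ∑_{n=2}^∞ a_n n^{-s} be a Dirichlet series with zero constant term which converges at every point of the right half-plane ℂ_+ = {s : Re s > 0}, and let t > 0. Then for every s ∈ ℂ_+ the integral (1/Γ(t)) ∫_0^∞ x^{t-1} f(x+s) dx converges absolutely, the Dirichlet series ∑_{n=2}^∞ a_n (log n)^{-t} n^{-s} converges, and (1/Γ(t)) ∫_0^∞ x^{t-1} f(x+s) dx = ∑_{n=2}^∞ a_n (log n)^{-t} n^{-s}. -/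
/-!
The series converges at `s / 2`, so the partial sums of `a n * n ^ (-s / 2)` are bounded.
Abel summation starting at `n = 2` (the coefficients `a 0`, `a 1` vanish) turns this into a bound
`‖∑_{n ≤ N} a n * n ^ (-(x + s))‖ ≤ C * 2 ^ (-x)`, uniform in `N` and `x ≥ 0`. As
`x ^ (t - 1) * 2 ^ (-x)` is integrable on `(0, ∞)`, dominated convergence allows integrating the
series termwise, and `∫₀^∞ x ^ (t - 1) * n ^ (-x) dx = Γ(t) * (log n) ^ (-t)`.
-/

open MeasureTheory Complex Set Filter Topology

theorem norm_integral_Ioc_cpow_mul_le {c : ℂ} (hc : 0 < c.re) {A : ℝ} (hA : 0 < A)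
    {B : ℝ → ℂ} {M : ℝ} (hB : ∀ u, ‖B u‖ ≤ M) (T : ℝ) :
    ‖∫ u in Ioc A T, (u : ℂ) ^ (-c - 1) * B u‖ ≤ M * (A ^ (-c.re) / c.re) := by
  have hM0 : 0 ≤ M := (norm_nonneg _).trans (hB 0)
  have hpow : IntegrableOn (fun u : ℝ => M * u ^ (-c.re - 1)) (Ioi A) :=
    (integrableOn_Ioi_rpow_of_lt (by linarith) hA).const_mul _
  calc _ ≤ ∫ u in Ioc A T, M * u ^ (-c.re - 1) := by
        refine norm_integral_le_of_norm_le (hpow.mono_set Ioc_subset_Ioi_self)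
          (ae_restrict_of_forall_mem measurableSet_Ioc fun u hu => ?_)
        rw [norm_mul, norm_cpow_eq_rpow_re_of_pos (hA.trans hu.1), sub_re, neg_re, one_re, mul_comm]
        exact mul_le_mul_of_nonneg_right (hB u) (Real.rpow_nonneg (hA.trans hu.1).le _)
    _ ≤ ∫ u in Ioi A, M * u ^ (-c.re - 1) :=
        setIntegral_mono_set hpow (ae_restrict_of_forall_mem measurableSet_Ioi fun u hu =>
          mul_nonneg hM0 (Real.rpow_nonneg (hA.trans hu).le _)) Ioc_subset_Ioi_self.eventuallyLE
    _ = M * (A ^ (-c.re) / c.re) := by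
        rw [integral_const_mul, integral_Ioi_rpow_of_lt (by linarith) hA]
        ring_nf

theorem norm_sum_range_mul_cpow_neg_le {b : ℕ → ℂ} (hb0 : b 0 = 0) (hb1 : b 1 = 0) {M : ℝ}
    (hM : ∀ N, ‖∑ n ∈ Finset.range (N + 1), b n‖ ≤ M) {c : ℂ} (hc : 0 < c.re) (N : ℕ) :
    ‖∑ n ∈ Finset.range (N + 1), b n * (n : ℂ) ^ (-c)‖ ≤ M * (1 + ‖c‖ / c.re) * 2 ^ (-c.re) := by
  have hM0 : 0 ≤ M := (norm_nonneg _).trans (hM 0)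
  rcases lt_or_ge N 2 with hN | hN
  · rw [Finset.sum_eq_zero fun n hn => by
      obtain rfl | rfl : n = 0 ∨ n = 1 := by have := Finset.mem_range.mp hn; omega
      all_goals simp [hb0, hb1]]
    simp only [norm_zero]
    positivity
  have hM' : ∀ m, ‖∑ k ∈ Finset.Icc 0 m, b k‖ ≤ M := fun m => Nat.range_succ_eq_Icc_zero m ▸ hM m
  have hderiv : ∀ u : ℝ, 0 < u →
      HasDerivAt (fun y : ℝ => (y : ℂ) ^ (-c)) (-c * (u : ℂ) ^ (-c - 1)) u := fun u hu =>
    hasDerivAt_ofReal_cpow_const hu.ne' (neg_ne_zero.mpr fun h => by simp [h] at hc)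
  have hderiv_eq : EqOn (deriv fun y : ℝ => (y : ℂ) ^ (-c))
      (fun u : ℝ => -c * (u : ℂ) ^ (-c - 1)) (Ioi 0) := fun u hu => (hderiv u hu).deriv
  have hint : IntegrableOn (deriv fun y : ℝ => (y : ℂ) ^ (-c)) (Icc 2 N) := by
    refine (ContinuousOn.integrableOn_Icc ?_).congr_fun
      (hderiv_eq.symm.mono fun u hu => two_pos.trans_le hu.1) measurableSet_Icc
    exact continuousOn_const.mul fun u hu => (continuousAt_ofReal_cpow_const u _
      (Or.inr (by linarith [hu.1] : u ≠ 0))).continuousWithinAt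
  have habel := sum_mul_eq_sub_integral_mul₁ b hb0 hb1 (N : ℝ)
    (fun u hu => (hderiv u (by linarith [hu.1])).differentiableAt) hint
  rw [Nat.floor_natCast, setIntegral_congr_fun measurableSet_Ioc
    (fun u hu => by rw [hderiv_eq (two_pos.trans hu.1), mul_assoc]), integral_const_mul] at habel
  have hboundary : ‖((N : ℝ) : ℂ) ^ (-c) * ∑ k ∈ Finset.Icc 0 N, b k‖ ≤ 2 ^ (-c.re) * M := by
    rw [norm_mul, norm_cpow_eq_rpow_re_of_pos (by positivity), neg_re]
    exact mul_le_mul (Real.rpow_le_rpow_of_nonpos two_pos (by exact_mod_cast hN) (by linarith))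
      (hM' N) (norm_nonneg _) (by positivity)
  have hremainder := norm_integral_Ioc_cpow_mul_le hc two_pos (fun u => hM' ⌊u⌋₊) N
  rw [Nat.range_succ_eq_Icc_zero]
  simp_rw [mul_comm (b _), ← ofReal_natCast]
  rw [habel]
  calc _ ≤ _ := norm_sub_le _ _
    _ ≤ 2 ^ (-c.re) * M + ‖c‖ * (M * (2 ^ (-c.re) / c.re)) := by
      rw [norm_mul (-c), norm_neg]
      exact add_le_add hboundary (mul_le_mul_of_nonneg_left hremainder (norm_nonneg _))
    _ = _ := by field_simp

theorem norm_sum_range_mul_cpow_neg_add_le {a : ℕ → ℂ} (ha0 : a 0 = 0) (ha1 : a 1 = 0)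
    {z₀ z : ℂ} (hz : z₀.re < z.re) {M : ℝ}
    (hM : ∀ N, ‖∑ n ∈ Finset.range (N + 1), a n * (n : ℂ) ^ (-z₀)‖ ≤ M) {x : ℝ} (hx : 0 ≤ x)
    (N : ℕ) :
    ‖∑ n ∈ Finset.range (N + 1), a n * (n : ℂ) ^ (-((x : ℂ) + z))‖ ≤
      M * (2 + ‖z - z₀‖ / (z - z₀).re) * 2 ^ (-x) := by
  obtain ⟨w, rfl⟩ : ∃ w, z = z₀ + w := ⟨z - z₀, by ring⟩
  rw [add_sub_cancel_left]
  have hw : 0 < w.re := by simpa using hz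
  have hre : ((x : ℂ) + w).re = x + w.re := by simp
  have hfactor : ∀ n : ℕ, a n * (n : ℂ) ^ (-((x : ℂ) + (z₀ + w))) =
      a n * (n : ℂ) ^ (-z₀) * (n : ℂ) ^ (-((x : ℂ) + w)) := by
    intro n
    rcases eq_or_ne n 0 with rfl | hn
    · simp [ha0]
    · rw [mul_assoc, ← cpow_add _ _ (Nat.cast_ne_zero.mpr hn)]
      ring_nf
  have hratio : ‖(x : ℂ) + w‖ / ((x : ℂ) + w).re ≤ 1 + ‖w‖ / w.re := by
    have hnorm : ‖(x : ℂ) + w‖ ≤ x + ‖w‖ := by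
      simpa [abs_of_nonneg hx] using norm_add_le (x : ℂ) w
    rw [hre, div_le_iff₀ (by positivity)]
    have hxw : 0 ≤ ‖w‖ / w.re * x := by positivity
    calc _ ≤ x + ‖w‖ := hnorm
      _ ≤ (1 + ‖w‖ / w.re) * (x + w.re) := by
        rw [add_mul, mul_add (‖w‖ / w.re), div_mul_cancel₀ _ hw.ne']; linarith
  have hM0 : 0 ≤ M := (norm_nonneg _).trans (hM 0)
  simp_rw [hfactor]
  calc _ ≤ M * (1 + ‖(x : ℂ) + w‖ / ((x : ℂ) + w).re) * 2 ^ (-((x : ℂ) + w).re) :=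
        norm_sum_range_mul_cpow_neg_le (by simp [ha0]) (by simp [ha1]) hM (by rw [hre]; positivity) N
    _ ≤ M * (2 + ‖w‖ / w.re) * 2 ^ (-x) := by
      refine mul_le_mul (mul_le_mul_of_nonneg_left (by linarith) hM0)
        (Real.rpow_le_rpow_of_exponent_le one_le_two (by rw [hre]; linarith))
        (by positivity) (by positivity)

theorem rpow_smul_cpow_neg_add {r : ℝ} (hr : 0 < r) (t x : ℝ) (s : ℂ) :
    (x ^ (t - 1) : ℝ) • (r : ℂ) ^ (-((x : ℂ) + s)) =
      (r : ℂ) ^ (-s) * ((x ^ (t - 1) * Real.exp (-(Real.log r * x)) : ℝ) : ℂ) := by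
  rw [neg_add, cpow_add _ _ (ofReal_ne_zero.mpr hr.ne'), ← ofReal_neg, ← ofReal_cpow hr.le,
    Real.rpow_def_of_pos hr, real_smul, ofReal_mul]
  ring_nf

theorem integrableOn_rpow_mul_exp_neg_mul {c t : ℝ} (hc : 0 < c) (ht : 0 < t) :
    IntegrableOn (fun x : ℝ => x ^ (t - 1) * Real.exp (-(c * x))) (Ioi 0) := by
  simpa [neg_mul] using integrableOn_rpow_mul_exp_neg_mul_rpow (by linarith : -1 < t - 1) one_pos hc

theorem integrableOn_rpow_smul_cpow_neg_add {r : ℝ} (hr : 1 < r) {t : ℝ} (ht : 0 < t) (s : ℂ) :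
    IntegrableOn (fun x : ℝ => (x ^ (t - 1) : ℝ) • (r : ℂ) ^ (-((x : ℂ) + s))) (Ioi 0) := by
  simp_rw [rpow_smul_cpow_neg_add (zero_lt_one.trans hr)]
  exact (integrableOn_rpow_mul_exp_neg_mul (Real.log_pos hr) ht).ofReal.const_mul _

theorem integral_rpow_smul_cpow_neg_add {r : ℝ} (hr : 1 < r) {t : ℝ} (ht : 0 < t) (s : ℂ) :
    ∫ x in Ioi 0, (x ^ (t - 1) : ℝ) • (r : ℂ) ^ (-((x : ℂ) + s)) =
      ((Real.Gamma t * Real.log r ^ (-t) : ℝ) : ℂ) * (r : ℂ) ^ (-s) := by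
  have hlog := Real.log_pos hr
  simp_rw [rpow_smul_cpow_neg_add (zero_lt_one.trans hr), integral_const_mul,
    integral_complex_ofReal, Real.integral_rpow_mul_exp_neg_mul_Ioi ht hlog, one_div,
    Real.inv_rpow hlog.le, ← Real.rpow_neg hlog.le]
  push_cast
  ring

theorem tendsto_integral_rpow_smul_of_norm_le {F : ℕ → ℝ → ℂ} {G : ℝ → ℂ} {t C r : ℝ}
    (ht : 0 < t) (hr : 1 < r) (hF : ∀ N, AEStronglyMeasurable (F N) (volume.restrict (Ioi 0)))
    (hbound : ∀ N, ∀ x > 0, ‖F N x‖ ≤ C * r ^ (-x))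
    (hlim : ∀ x > 0, Tendsto (fun N => F N x) atTop (𝓝 (G x))) :
    IntegrableOn (fun x : ℝ => (x ^ (t - 1) : ℝ) • G x) (Ioi 0) ∧
      Tendsto (fun N => ∫ x in Ioi 0, (x ^ (t - 1) : ℝ) • F N x) atTop
        (𝓝 (∫ x in Ioi 0, (x ^ (t - 1) : ℝ) • G x)) := by
  set g : ℝ → ℝ := fun x => C * (x ^ (t - 1) * Real.exp (-(Real.log r * x)))
  have hg : IntegrableOn g (Ioi 0) :=
    (integrableOn_rpow_mul_exp_neg_mul (Real.log_pos hr) ht).const_mul C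
  have hweight : ∀ x > (0 : ℝ), ∀ {y : ℂ}, ‖y‖ ≤ C * r ^ (-x) → ‖(x ^ (t - 1) : ℝ) • y‖ ≤ g x := by
    intro x hx y hy
    rw [Real.rpow_def_of_pos (zero_lt_one.trans hr), mul_neg] at hy
    rw [norm_smul, Real.norm_of_nonneg (by positivity)]
    calc _ ≤ x ^ (t - 1) * (C * Real.exp (-(Real.log r * x))) :=
          mul_le_mul_of_nonneg_left hy (by positivity)
      _ = g x := by ring
  have hlimit_le : ∀ x > 0, ‖G x‖ ≤ C * r ^ (-x) := fun x hx =>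
    le_of_tendsto' (hlim x hx).norm fun N => hbound N x hx
  have hmeas : ∀ N, AEStronglyMeasurable (fun x : ℝ => (x ^ (t - 1) : ℝ) • F N x)
      (volume.restrict (Ioi 0)) := fun N =>
    ((ContinuousOn.rpow_const continuousOn_id fun x hx => Or.inl (ne_of_gt hx)).aestronglyMeasurable
      measurableSet_Ioi).smul (hF N)
  have hlim' : ∀ᵐ x ∂(volume.restrict (Ioi 0)), Tendsto (fun N => (x ^ (t - 1) : ℝ) • F N x)
      atTop (𝓝 ((x ^ (t - 1) : ℝ) • G x)) :=
    ae_restrict_of_forall_mem measurableSet_Ioi fun x hx => (hlim x hx).const_smul _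
  refine ⟨hg.mono' (aestronglyMeasurable_of_tendsto_ae atTop hmeas hlim')
      (ae_restrict_of_forall_mem measurableSet_Ioi fun x hx => hweight x hx (hlimit_le x hx)),
    tendsto_integral_of_dominated_convergence g hmeas hg
      (fun N => ae_restrict_of_forall_mem measurableSet_Ioi fun x hx =>
        hweight x hx (hbound N x hx))
      hlim'⟩

theorem integral_rpow_smul_sum_range_mul_cpow {a : ℕ → ℂ} (ha0 : a 0 = 0) (ha1 : a 1 = 0)
    {t : ℝ} (ht : 0 < t) (s : ℂ) (N : ℕ) :
    ∫ x in Ioi 0, (x ^ (t - 1) : ℝ) • ∑ n ∈ Finset.range (N + 1), a n * (n : ℂ) ^ (-((x : ℂ) + s)) =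
      Real.Gamma t *
        ∑ n ∈ Finset.range (N + 1), a n * ((Real.log n ^ (-t) : ℝ) : ℂ) * (n : ℂ) ^ (-s) := by
  have hterm : ∀ n : ℕ,
      IntegrableOn (fun x : ℝ => (x ^ (t - 1) : ℝ) • (a n * (n : ℂ) ^ (-((x : ℂ) + s)))) (Ioi 0) ∧
      ∫ x in Ioi 0, (x ^ (t - 1) : ℝ) • (a n * (n : ℂ) ^ (-((x : ℂ) + s))) =
        Real.Gamma t * (a n * ((Real.log n ^ (-t) : ℝ) : ℂ) * (n : ℂ) ^ (-s)) := by
    intro n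
    rcases lt_or_ge n 2 with hn | hn
    · obtain rfl | rfl : n = 0 ∨ n = 1 := by omega
      all_goals simp [ha0, ha1]
    have hn' : (1 : ℝ) < n := by exact_mod_cast hn
    have hint := integrableOn_rpow_smul_cpow_neg_add hn' ht s
    have hval := integral_rpow_smul_cpow_neg_add hn' ht s
    rw [ofReal_natCast] at hint hval
    simp_rw [← mul_smul_comm]
    refine ⟨hint.const_mul (a n), ?_⟩
    rw [integral_const_mul, hval]
    push_cast
    ring
  simp_rw [Finset.smul_sum]
  rw [integral_finsetSum _ fun n _ => (hterm n).1, Finset.mul_sum]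
  exact Finset.sum_congr rfl fun n _ => (hterm n).2

/-- action of the Riemann–Liouville operator `I_t` on a convergent
Dirichlet series with zero constant term. -/
theorem stmt4 (a : ℕ → ℂ) (ha0 : a 0 = 0) (ha1 : a 1 = 0) (f : ℂ → ℂ)
    (hf : ∀ s : ℂ, 0 < s.re →
      Filter.Tendsto (fun N => ∑ n ∈ Finset.range (N + 1), a n * (n : ℂ) ^ (-s))
        Filter.atTop (nhds (f s)))
    (t : ℝ) (ht : 0 < t) (s : ℂ) (hs : 0 < s.re) :
    MeasureTheory.IntegrableOn (fun x : ℝ => (x ^ (t - 1) : ℝ) • f ((x : ℂ) + s))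
      (Set.Ioi 0) ∧
    ∃ L : ℂ,
      Filter.Tendsto
        (fun N => ∑ n ∈ Finset.range (N + 1),
          a n * ((Real.log n ^ (-t) : ℝ) : ℂ) * (n : ℂ) ^ (-s))
        Filter.atTop (nhds L) ∧
      (1 / (Real.Gamma t : ℂ)) *
          ∫ x in Set.Ioi (0 : ℝ), (x ^ (t - 1) : ℝ) • f ((x : ℂ) + s) = L := by
  obtain ⟨M, hM⟩ : ∃ M, ∀ N, ‖∑ n ∈ Finset.range (N + 1), a n * (n : ℂ) ^ (-(s / 2))‖ ≤ M := by
    obtain ⟨M, hM⟩ := (hf (s / 2) (by simpa using hs)).norm.bddAbove_range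
    exact ⟨M, fun N => hM ⟨N, rfl⟩⟩
  obtain ⟨hint, hlim⟩ := tendsto_integral_rpow_smul_of_norm_le
    (F := fun N x => ∑ n ∈ Finset.range (N + 1), a n * (n : ℂ) ^ (-((x : ℂ) + s)))
    (G := fun x => f ((x : ℂ) + s)) ht one_lt_two
    (fun N => (Finset.measurable_sum _ fun n _ =>
      measurable_const.mul (measurable_const.pow (by fun_prop))).aestronglyMeasurable)
    (fun N x hx => norm_sum_range_mul_cpow_neg_add_le ha0 ha1 (by simp; linarith) hM hx.le N)
    (fun x hx => hf _ (by simp; linarith))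
  refine ⟨hint, _, ?_, rfl⟩
  have hΓ : (Real.Gamma t : ℂ) ≠ 0 := ofReal_ne_zero.mpr (Real.Gamma_pos_of_pos ht).ne'
  refine (hlim.const_mul (1 / (Real.Gamma t : ℂ))).congr fun N => ?_
  rw [integral_rpow_smul_sum_range_mul_cpow ha0 ha1 ht s N, one_div, inv_mul_cancel_left₀ hΓ]
end

section
/- For every t > 0, ∫_{-∞}^{+∞} e^{1-iy}/(1-iy)^{t+1} dy = 2π/Γ(t+1), where w^{t+1} = exp((t+1)·Log w) denotes the principal branch of the power on the right half-plane Re w > 0. -/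
/-
For `Re a > 0` the function `f(x) = x^(a-1) e^(-x)` on `x > 0` has Fourier transform
`Γ(a) / (1 + 2πiξ)^a`: the Laplace transform `∫ x^(a-1) e^(-zx) dx` equals `Γ(a) / z^a`
for real `z > 0` by rescaling the Gamma integral, hence on all of `Re z > 0` by the identity
theorem. For `Re a > 1` this transform is integrable, so Fourier inversion at `x = 1` gives
`e⁻¹ = Γ(a) ∫ e^(2πiξ) / (1 + 2πiξ)^a dξ`, the claim after substituting `y = -2πξ`.
-/

open MeasureTheory Complex Set Filter Topology
open scoped Real FourierTransform

lemma norm_cpow_mul_cexp_neg_mul {x : ℝ} (hx : 0 < x) (s z : ℂ) :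
    ‖(x : ℂ) ^ s * cexp (-(z * x))‖ = x ^ s.re * Real.exp (-(z.re * x)) := by
  rw [norm_mul, norm_exp, norm_cpow_eq_rpow_re_of_pos hx]
  simp

lemma aestronglyMeasurable_cpow_mul_cexp_neg_mul (s z : ℂ) :
    AEStronglyMeasurable (fun x : ℝ ↦ (x : ℂ) ^ s * cexp (-(z * x)))
      (volume.restrict (Ioi 0)) :=
  ContinuousOn.aestronglyMeasurable (fun x hx ↦
    ((continuousAt_ofReal_cpow_const x s (Or.inr hx.ne')).mul
      (by fun_prop)).continuousWithinAt) measurableSet_Ioi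

section GammaIntegral

variable {a z : ℂ}

lemma integrableOn_cpow_mul_cexp_neg_mul_Ioi (ha : 0 < a.re) (hz : 0 < z.re) :
    IntegrableOn (fun x : ℝ ↦ (x : ℂ) ^ (a - 1) * cexp (-(z * x))) (Ioi 0) := by
  refine Integrable.mono' (integrableOn_rpow_mul_exp_neg_mul_rpow (p := 1)
    (s := a.re - 1) (by linarith) one_pos hz) (aestronglyMeasurable_cpow_mul_cexp_neg_mul _ _) ?_
  filter_upwards [ae_restrict_mem measurableSet_Ioi] with x hx
  rw [norm_cpow_mul_cexp_neg_mul hx, Real.rpow_one, sub_re, one_re, neg_mul]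

lemma differentiableOn_integral_cpow_mul_cexp_neg_mul (ha : 0 < a.re) :
    DifferentiableOn ℂ (fun z ↦ ∫ x : ℝ in Ioi 0, (x : ℂ) ^ (a - 1) * cexp (-(z * x)))
      {z | 0 < z.re} := by
  intro z (hz : 0 < z.re)
  have hderiv : ∀ᵐ x : ℝ ∂volume.restrict (Ioi 0), ∀ w ∈ Metric.ball z (z.re / 2),
      HasDerivAt (fun w ↦ (x : ℂ) ^ (a - 1) * cexp (-(w * x)))
        (-((x : ℂ) ^ a * cexp (-(w * x)))) w := by
    filter_upwards [ae_restrict_mem measurableSet_Ioi] with x (hx : 0 < x) w _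
    have hx' : (x : ℂ) ≠ 0 := ofReal_ne_zero.mpr hx.ne'
    have : HasDerivAt (fun w : ℂ ↦ cexp (-(w * x))) (-x * cexp (-(w * x))) w := by
      simpa [mul_comm] using ((hasDerivAt_id w).mul_const (x : ℂ)).neg.cexp
    refine (this.const_mul ((x : ℂ) ^ (a - 1))).congr_deriv ?_
    rw [cpow_sub _ _ hx', cpow_one]
    field_simp
  have hbound : ∀ᵐ x : ℝ ∂volume.restrict (Ioi 0), ∀ w ∈ Metric.ball z (z.re / 2),
      ‖-((x : ℂ) ^ a * cexp (-(w * x)))‖ ≤ x ^ a.re * Real.exp (-(z.re / 2 * x)) := by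
    filter_upwards [ae_restrict_mem measurableSet_Ioi] with x (hx : 0 < x) w hw
    have hre : z.re / 2 ≤ w.re := by
      have := (abs_re_le_norm (w - z)).trans_lt (mem_ball_iff_norm.mp hw)
      rw [sub_re] at this
      linarith [(abs_lt.mp this).1]
    rw [norm_neg, norm_cpow_mul_cexp_neg_mul hx]
    gcongr
  have hint : IntegrableOn (fun x : ℝ ↦ x ^ a.re * Real.exp (-(z.re / 2 * x))) (Ioi 0) := by
    simpa [Real.rpow_one, neg_mul] using
      integrableOn_rpow_mul_exp_neg_mul_rpow (p := 1) (by linarith) one_pos (half_pos hz)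
  exact (hasDerivAt_integral_of_dominated_loc_of_deriv_le
    (F := fun w (x : ℝ) ↦ (x : ℂ) ^ (a - 1) * cexp (-(w * x)))
    (F' := fun w (x : ℝ) ↦ -((x : ℂ) ^ a * cexp (-(w * x))))
    (Metric.ball_mem_nhds z (half_pos hz))
    (Eventually.of_forall fun _ ↦ aestronglyMeasurable_cpow_mul_cexp_neg_mul _ _)
    (integrableOn_cpow_mul_cexp_neg_mul_Ioi ha hz)
    (aestronglyMeasurable_cpow_mul_cexp_neg_mul _ _).neg hbound hint
    hderiv).2.differentiableAt.differentiableWithinAt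

lemma integral_cpow_mul_cexp_neg_mul_Ioi (ha : 0 < a.re) (hz : 0 < z.re) :
    ∫ x : ℝ in Ioi 0, (x : ℂ) ^ (a - 1) * cexp (-(z * x)) = Gamma a / z ^ a := by
  have hU : IsOpen {z : ℂ | 0 < z.re} := isOpen_lt continuous_const continuous_re
  have hG : DifferentiableOn ℂ (fun z : ℂ ↦ Gamma a / z ^ a) {z | 0 < z.re} := fun w hw ↦
    have hw0 : w ≠ 0 := fun h ↦ by simp [h] at hw
    ((differentiableAt_const _).div
      (differentiableAt_id.cpow_const (mem_slitPlane_iff.mpr (Or.inl hw)))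
      (cpow_ne_zero_iff.mpr (Or.inl hw0))).differentiableWithinAt
  have hreal : ∀ r : ℝ, 0 < r →
      ∫ x : ℝ in Ioi 0, (x : ℂ) ^ (a - 1) * cexp (-(r * x)) = Gamma a / (r : ℂ) ^ a := by
    intro r hr
    rw [integral_cpow_mul_exp_neg_mul_Ioi ha hr, one_div,
      inv_cpow _ _ (by simp [arg_ofReal_of_nonneg hr.le, Real.pi_ne_zero.symm]), inv_mul_eq_div]
  have hfreq : ∃ᶠ r : ℝ in 𝓝[≠] 1,
      ∫ x : ℝ in Ioi 0, (x : ℂ) ^ (a - 1) * cexp (-(r * x)) = Gamma a / (r : ℂ) ^ a :=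
    ((eventually_nhdsWithin_of_eventually_nhds (Ioi_mem_nhds one_pos)).mono hreal).frequently
  have hofReal : Tendsto ofReal (𝓝[≠] 1) (𝓝[≠] ((1 : ℝ) : ℂ)) :=
    continuous_ofReal.continuousWithinAt.tendsto_nhdsWithin fun _ _ ↦ by simp_all
  exact ((differentiableOn_integral_cpow_mul_cexp_neg_mul ha).analyticOnNhd hU
    ).eqOn_of_preconnected_of_frequently_eq (hG.analyticOnNhd hU)
    (convex_halfSpace_re_gt 0).isPreconnected (by simp) (hofReal.frequently hfreq) hz

end GammaIntegral

lemma norm_inv_cpow_le {z : ℂ} (hz : z ≠ 0) (w : ℂ) :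
    ‖(z ^ w)⁻¹‖ ≤ ‖z‖ ^ (-w.re) * Real.exp (π * |w.im|) := by
  rw [norm_inv, norm_cpow_of_ne_zero hz, inv_div, div_eq_mul_inv, Real.rpow_neg (norm_nonneg _),
    mul_comm (Real.exp _)]
  gcongr _ * Real.exp ?_
  calc arg z * w.im ≤ |arg z * w.im| := le_abs_self _
    _ = |arg z| * |w.im| := abs_mul _ _
    _ ≤ π * |w.im| := by gcongr; exact abs_arg_le_pi z

lemma one_add_ofReal_mul_I_ne_zero (y : ℝ) : (1 : ℂ) + y * I ≠ 0 :=
  fun h ↦ by simpa using congrArg re h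

lemma integrable_inv_one_add_mul_I_cpow {a : ℂ} (ha : 1 < a.re) :
    Integrable (fun y : ℝ ↦ ((1 + y * I) ^ a)⁻¹) := by
  refine ((integrable_rpow_neg_one_add_norm_sq (r := a.re) (by simpa using ha)).mul_const
    (Real.exp (π * |a.im|))).mono' ?_ (Eventually.of_forall fun y ↦ ?_)
  · refine (continuous_iff_continuousAt.mpr fun y ↦ ?_).aestronglyMeasurable
    exact ((continuousAt_cpow_const (by simp [mem_slitPlane_iff])).comp (by fun_prop)).inv₀
      (cpow_ne_zero_iff.mpr (Or.inl (one_add_ofReal_mul_I_ne_zero y)))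
  · refine (norm_inv_cpow_le (one_add_ofReal_mul_I_ne_zero y) _).trans_eq ?_
    rw [← ofReal_one, norm_add_mul_I, Real.sqrt_eq_rpow, ← Real.rpow_mul (by positivity)]
    simp [div_eq_inv_mul]

noncomputable def gammaDensity (a : ℂ) : ℝ → ℂ :=
  (Ioi 0).indicator fun x : ℝ ↦ (x : ℂ) ^ (a - 1) * cexp (-x)

section GammaDensity

variable {a : ℂ}

lemma integrable_gammaDensity (ha : 0 < a.re) : Integrable (gammaDensity a) :=
  (integrable_indicator_iff measurableSet_Ioi).mpr
    (by simpa using integrableOn_cpow_mul_cexp_neg_mul_Ioi ha (z := 1) (by simp))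

lemma continuousAt_gammaDensity {x : ℝ} (hx : 0 < x) : ContinuousAt (gammaDensity a) x := by
  refine ContinuousAt.congr ?_ (Filter.eventuallyEq_of_mem (Ioi_mem_nhds hx)
    fun y hy ↦ (indicator_of_mem hy _).symm)
  exact (continuousAt_ofReal_cpow_const x _ (Or.inr hx.ne')).mul (by fun_prop)

lemma fourier_gammaDensity (ha : 0 < a.re) (ξ : ℝ) :
    𝓕 (gammaDensity a) ξ = Gamma a / (1 + (2 * π * ξ : ℝ) * I) ^ a := by
  rw [← integral_cpow_mul_cexp_neg_mul_Ioi ha (by simp), Real.fourier_eq', gammaDensity,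
    ← integral_indicator measurableSet_Ioi]
  congr 1 with x
  by_cases hx : x ∈ Ioi 0
  · simp only [indicator_of_mem hx, smul_eq_mul, RCLike.inner_apply, conj_trivial]
    rw [mul_left_comm, ← Complex.exp_add]
    congr 2
    push_cast
    ring
  · simp [indicator_of_notMem hx]

lemma integrable_fourier_gammaDensity (ha : 1 < a.re) : Integrable (𝓕 (gammaDensity a)) := by
  simp_rw [funext (fourier_gammaDensity (a := a) (by linarith)), div_eq_mul_inv]
  exact ((integrable_inv_one_add_mul_I_cpow ha).comp_mul_left' Real.two_pi_pos.ne').const_mul _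

end GammaDensity

theorem integral_cexp_div_one_sub_mul_I_cpow {a : ℂ} (ha : 1 < a.re) :
    ∫ y : ℝ, cexp (1 - y * I) / (1 - y * I) ^ a = 2 * π / Gamma a := by
  have ha₀ : 0 < a.re := by linarith
  have hΓ : Gamma a ≠ 0 := Gamma_ne_zero_of_re_pos ha₀
  have hinv := (integrable_gammaDensity ha₀).fourierInv_fourier_eq
    (integrable_fourier_gammaDensity ha) (continuousAt_gammaDensity one_pos)
  simp only [Real.fourierInv_eq', fourier_gammaDensity ha₀, smul_eq_mul, RCLike.inner_apply,
    conj_trivial, one_mul] at hinv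
  have hpt (ξ : ℝ) : cexp (1 - (-(2 * π) * ξ : ℝ) * I) / (1 - (-(2 * π) * ξ : ℝ) * I) ^ a
      = cexp 1 / Gamma a *
        (cexp ((2 * π * ξ : ℝ) * I) * (Gamma a / (1 + (2 * π * ξ : ℝ) * I) ^ a)) := by
    have : (1 : ℂ) - (-(2 * π) * ξ : ℝ) * I = 1 + (2 * π * ξ : ℝ) * I := by
      push_cast; ring
    rw [this, exp_add]
    field_simp
  have hcv := Measure.integral_comp_mul_left (fun y : ℝ ↦ cexp (1 - y * I) / (1 - y * I) ^ a)
    (-(2 * π))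
  simp only [hpt, integral_const_mul, hinv, gammaDensity, indicator_of_mem (mem_Ioi.mpr one_pos),
    ofReal_one, one_cpow, one_mul, abs_inv, abs_neg, abs_of_pos Real.two_pi_pos] at hcv
  rw [eq_inv_smul_iff₀ Real.two_pi_pos.ne'] at hcv
  rw [← hcv, real_smul, div_mul_eq_mul_div, ← exp_add, add_neg_cancel, exp_zero]
  push_cast
  ring

/-- `∫_{-∞}^{+∞} e^{1-iy}/(1-iy)^{t+1} dy = 2π/Γ(t+1)`. -/
theorem stmt5 (t : ℝ) (ht : 0 < t) :
    ∫ y : ℝ, Complex.exp (1 - y * Complex.I) / (1 - y * Complex.I) ^ ((t : ℂ) + 1)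
      = ((2 * Real.pi / Real.Gamma (t + 1) : ℝ) : ℂ) := by
  rw [integral_cexp_div_one_sub_mul_I_cpow (by simpa using ht),
    show (t : ℂ) + 1 = ((t + 1 : ℝ) : ℂ) by push_cast; rfl, Gamma_ofReal]
  norm_cast
end
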